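/- Let F be a field, let a₀, a₁, a₂, c, f₀, f₁, f₂ be nonzero elements of F, and set q = a₀a₁a₂. Let R be the map fixing the a_i, sending c ↦ q^{-1}c^{-1} and f_i ↦ f_i^{-1}; let W₀ be the map fixing the a_i, sending c ↦ c^{-1} and f_i ↦ a_i a_{i+1}(a_{i-1}a_i + a_{i-1}f_i + f_{i-1}f_i)/(f_{i-1}(a_i a_{i+1} + a_i f_{i+1} + f_i f_{i+1})); and let W₁ be the map fixing the a_i, sending c ↦ q^{-2}c^{-1} and f_i ↦ (1 + a_i f_i + a_i a_{i+1} f_i f_{i+1})/(a_i a_{i+1} f_{i+1}(1 + a_{i-1}f_{i-1} + a_{i-1}a_i f_{i-1} f_i)) (indices mod 3). Then, whenever all intermediate denominators are nonzero, R ∘ W₀ = W₁ ∘ R on such tuples. (This is the relation r w₀ = w₁ r of the birational representation of W̃((A₂+A₁)^{(1)}).) -/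

import Mathlib

/-- The birational action of `r` of `W̃((A₂+A₁)⁽¹⁾)` on
`(a₀, a₁, a₂, c, f₀, f₁, f₂)`: it fixes the `aᵢ`, sends `c ↦ q⁻¹c⁻¹`
(where `q = a₀a₁a₂`) and `fᵢ ↦ fᵢ⁻¹`. -/
def weylR {F : Type*} [Field F] :
    F × F × F × F × F × F × F → F × F × F × F × F × F × F
  | (a0, a1, a2, c, f0, f1, f2) =>
    (a0, a1, a2, (a0 * a1 * a2)⁻¹ * c⁻¹, f0⁻¹, f1⁻¹, f2⁻¹)

/-- The birational action of `w₀` of `W̃((A₂+A₁)⁽¹⁾)`. -/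
def weylW0 {F : Type*} [Field F] :
    F × F × F × F × F × F × F → F × F × F × F × F × F × F
  | (a0, a1, a2, c, f0, f1, f2) =>
    (a0, a1, a2, c⁻¹,
      a0 * a1 * (a2 * a0 + a2 * f0 + f2 * f0) / (f2 * (a0 * a1 + a0 * f1 + f0 * f1)),
      a1 * a2 * (a0 * a1 + a0 * f1 + f0 * f1) / (f0 * (a1 * a2 + a1 * f2 + f1 * f2)),
      a2 * a0 * (a1 * a2 + a1 * f2 + f1 * f2) / (f1 * (a2 * a0 + a2 * f0 + f2 * f0)))

/-- The birational action of `w₁` of `W̃((A₂+A₁)⁽¹⁾)`: it fixes the `aᵢ`,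
sends `c ↦ q⁻²c⁻¹` (where `q = a₀a₁a₂`) and
`fᵢ ↦ (1 + aᵢfᵢ + aᵢa_{i+1}fᵢf_{i+1}) /
      (aᵢa_{i+1}f_{i+1}(1 + a_{i-1}f_{i-1} + a_{i-1}aᵢf_{i-1}fᵢ))`. -/
def weylW1 {F : Type*} [Field F] :
    F × F × F × F × F × F × F → F × F × F × F × F × F × F
  | (a0, a1, a2, c, f0, f1, f2) =>
    (a0, a1, a2, ((a0 * a1 * a2) ^ 2)⁻¹ * c⁻¹,
      (1 + a0 * f0 + a0 * a1 * f0 * f1) /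
        (a0 * a1 * f1 * (1 + a2 * f2 + a2 * a0 * f2 * f0)),
      (1 + a1 * f1 + a1 * a2 * f1 * f2) /
        (a1 * a2 * f2 * (1 + a0 * f0 + a0 * a1 * f0 * f1)),
      (1 + a2 * f2 + a2 * a0 * f2 * f0) /
        (a2 * a0 * f0 * (1 + a1 * f1 + a1 * a2 * f1 * f2)))

/-- Nonvanishing of the denominators appearing in `w₀`. -/
def denW0 {F : Type*} [Field F] (x : F × F × F × F × F × F × F) : Prop :=
  match x with
  | (a0, a1, a2, _, f0, f1, f2) =>
    f2 * (a0 * a1 + a0 * f1 + f0 * f1) ≠ 0 ∧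
    f0 * (a1 * a2 + a1 * f2 + f1 * f2) ≠ 0 ∧
    f1 * (a2 * a0 + a2 * f0 + f2 * f0) ≠ 0

/-- Nonvanishing of the denominators appearing in `w₁`. -/
def denW1 {F : Type*} [Field F] (x : F × F × F × F × F × F × F) : Prop :=
  match x with
  | (a0, a1, a2, _, f0, f1, f2) =>
    a0 * a1 * f1 * (1 + a2 * f2 + a2 * a0 * f2 * f0) ≠ 0 ∧
    a1 * a2 * f2 * (1 + a0 * f0 + a0 * a1 * f0 * f1) ≠ 0 ∧
    a2 * a0 * f0 * (1 + a1 * f1 + a1 * a2 * f1 * f2) ≠ 0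

/-!
Since `r` inverts every `fᵢ`, the identity
`1 + a f⁻¹ + a b f⁻¹ g⁻¹ = (a b + a g + f g) / (f g)` turns each `f`-coordinate of `w₁ r` into the
inverse of the corresponding coordinate of `w₀`, which is the `f`-coordinate of `r w₀`. On the
`c`-coordinate both sides give `q⁻¹ c`.
-/

section

variable {K : Type*} [Field K]

theorem one_add_mul_inv_add_mul_mul_inv_mul_inv {f g : K} (hf : f ≠ 0) (hg : g ≠ 0) (a b : K) :
    1 + a * f⁻¹ + a * b * f⁻¹ * g⁻¹ = (a * b + a * g + f * g) / (f * g) := by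
  field_simp
  ring

theorem inv_mul_inv_inv_eq_inv_sq_mul_inv_mul_inv_inv (q c : K) :
    q⁻¹ * c⁻¹⁻¹ = (q ^ 2)⁻¹ * (q⁻¹ * c⁻¹)⁻¹ := by
  rcases eq_or_ne q 0 with rfl | hq
  · simp
  · field_simp

/-- The `fᵢ`-coordinate of `w₀`, for `(a, b, d) = (aᵢ, aᵢ₊₁, aᵢ₋₁)` and
`(f, g, h) = (fᵢ, fᵢ₊₁, fᵢ₋₁)`. -/
def weylW0Coord (a b d f g h : K) : K :=
  a * b * (d * a + d * f + h * f) / (h * (a * b + a * g + f * g))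

/-- The `fᵢ`-coordinate of `w₁`, with the same conventions as `weylW0Coord`. -/
def weylW1Coord (a b d f g h : K) : K :=
  (1 + a * f + a * b * f * g) / (a * b * g * (1 + d * h + d * a * h * f))

theorem inv_weylW0Coord {f g h : K} (hf : f ≠ 0) (hg : g ≠ 0) (hh : h ≠ 0) (a b d : K) :
    (weylW0Coord a b d f g h)⁻¹ = weylW1Coord a b d f⁻¹ g⁻¹ h⁻¹ := by
  rw [weylW0Coord, weylW1Coord, one_add_mul_inv_add_mul_mul_inv_mul_inv hf hg,
    one_add_mul_inv_add_mul_mul_inv_mul_inv hh hf, inv_div]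
  field_simp

end

theorem weylR_weylW0_eq_weylW1_weylR_general
    (F : Type*) [Field F] (a0 a1 a2 c f0 f1 f2 : F)
    (hf0 : f0 ≠ 0) (hf1 : f1 ≠ 0) (hf2 : f2 ≠ 0) :
    weylR (weylW0 (a0, a1, a2, c, f0, f1, f2)) =
      weylW1 (weylR (a0, a1, a2, c, f0, f1, f2)) := by
  simp only [weylR, weylW0, weylW1, Prod.mk.injEq, true_and]
  exact ⟨inv_mul_inv_inv_eq_inv_sq_mul_inv_mul_inv_inv _ c, inv_weylW0Coord hf0 hf1 hf2 a0 a1 a2,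
    inv_weylW0Coord hf1 hf2 hf0 a1 a2 a0, inv_weylW0Coord hf2 hf0 hf1 a2 a0 a1⟩

/-- the relation `r w₀ = w₁ r` of the birational representation
of `W̃((A₂+A₁)⁽¹⁾)`. -/
theorem weylR_weylW0_eq_weylW1_weylR
    (F : Type*) [Field F] (a0 a1 a2 c f0 f1 f2 : F)
    (ha0 : a0 ≠ 0) (ha1 : a1 ≠ 0) (ha2 : a2 ≠ 0) (hc : c ≠ 0)
    (hf0 : f0 ≠ 0) (hf1 : f1 ≠ 0) (hf2 : f2 ≠ 0)
    (h1 : denW0 (a0, a1, a2, c, f0, f1, f2))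
    (h2 : denW1 (weylR (a0, a1, a2, c, f0, f1, f2))) :
    weylR (weylW0 (a0, a1, a2, c, f0, f1, f2)) =
      weylW1 (weylR (a0, a1, a2, c, f0, f1, f2)) :=
  weylR_weylW0_eq_weylW1_weylR_general F a0 a1 a2 c f0 f1 f2 hf0 hf1 hf2
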